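/- Let λ > 0. Then there exist constants C > 0 and x₀ > 0 such that for all x ≥ x₀, | x(1 - F_λ(x)) / (2 φ(x) Φ(λx)) - (1 - x^{-2} + 3 x^{-4}) | ≤ C x^{-6}; that is, 1 - F_λ(x) = (2φ(x)Φ(λx)/x) · (1 - x^{-2} + 3x^{-4} + O(x^{-6})) as x → ∞. -/

import Mathlib

/-!
With `stdTail x = ∫ₓ^∞ φ`, three integrations by parts against `φ'(t) = -t φ(t)` give the
Mills ratio expansion `x stdTail x / φ(x) = 1 - x⁻² + 3x⁻⁴ + O(x⁻⁶)`. For `λ > 0`, monotonicity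
of `Φ` gives `2 Φ(λx) stdTail x ≤ 1 - F_λ(x) ≤ 2 stdTail x`, so the skew normal ratio differs
from the Mills ratio by at most `stdTail(λx) / Φ(λx)`, which decays like a Gaussian in `x`.
-/

open Real MeasureTheory Filter Topology

/-- Standard normal density. -/
noncomputable def stdPhi (x : ℝ) : ℝ := (Real.sqrt (2 * Real.pi))⁻¹ * Real.exp (-(x ^ 2) / 2)

/-- Standard normal cdf. -/
noncomputable def stdCdf (x : ℝ) : ℝ := ∫ t in Set.Iic x, stdPhi t

/-- Skew normal density with shape parameter l. -/
noncomputable def snPdf (l x : ℝ) : ℝ := 2 * stdPhi x * stdCdf (l * x)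

/-- Skew normal cdf with shape parameter l. -/
noncomputable def snCdf (l x : ℝ) : ℝ := ∫ t in Set.Iic x, snPdf l t

/-- Gumbel extreme value distribution function. -/
noncomputable def gumbel (x : ℝ) : ℝ := Real.exp (-Real.exp (-x))

open Set

lemma stdPhi_pos (x : ℝ) : 0 < stdPhi x := by
  unfold stdPhi; positivity

lemma stdPhi_neg (x : ℝ) : stdPhi (-x) = stdPhi x := by
  simp [stdPhi]

lemma continuous_stdPhi : Continuous stdPhi := by
  unfold stdPhi; fun_prop

lemma stdPhi_eq_mul_exp (x : ℝ) :
    stdPhi x = (Real.sqrt (2 * Real.pi))⁻¹ * Real.exp (-(1 / 2) * x ^ 2) := by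
  rw [stdPhi]; ring_nf

lemma integrable_stdPhi : Integrable stdPhi := by
  rw [show stdPhi = _ from funext stdPhi_eq_mul_exp]
  exact (integrable_exp_neg_mul_sq (by norm_num)).const_mul _

lemma integral_stdPhi : ∫ x, stdPhi x = 1 := by
  simp only [stdPhi_eq_mul_exp]
  rw [integral_const_mul, integral_gaussian, show Real.pi / (1 / 2) = 2 * Real.pi by ring,
    inv_mul_cancel₀ (by positivity)]

lemma hasDerivAt_stdPhi (x : ℝ) : HasDerivAt stdPhi (-x * stdPhi x) x := by
  have h : HasDerivAt (fun x : ℝ => -(x ^ 2) / 2) (-x) x :=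
    ((hasDerivAt_pow 2 x).neg.div_const 2).congr_deriv (by ring)
  refine (h.exp.const_mul (Real.sqrt (2 * Real.pi))⁻¹).congr_deriv ?_
  unfold stdPhi; ring

lemma tendsto_pow_mul_stdPhi_atTop (k : ℕ) :
    Tendsto (fun x => x ^ k * stdPhi x) atTop (𝓝 0) := by
  have h := ((tendsto_rpow_abs_mul_exp_neg_mul_sq_cocompact (by norm_num : (0 : ℝ) < 1 / 2)
    k).mono_left atTop_le_cocompact).const_mul (Real.sqrt (2 * Real.pi))⁻¹
  rw [mul_zero] at h
  refine h.congr' ?_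
  filter_upwards [eventually_ge_atTop 0] with x hx
  rw [abs_of_nonneg hx, Real.rpow_natCast, stdPhi_eq_mul_exp]
  ring

noncomputable def stdTail (x : ℝ) : ℝ := ∫ t in Ioi x, stdPhi t

lemma stdTail_nonneg (x : ℝ) : 0 ≤ stdTail x :=
  setIntegral_nonneg measurableSet_Ioi fun t _ => (stdPhi_pos t).le

lemma stdCdf_add_stdTail (x : ℝ) : stdCdf x + stdTail x = 1 := by
  rw [stdCdf, stdTail, intervalIntegral.integral_Iic_add_Ioi integrable_stdPhi.integrableOn
    integrable_stdPhi.integrableOn, integral_stdPhi]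

lemma stdCdf_neg (x : ℝ) : stdCdf (-x) = stdTail x := by
  have h := integral_comp_neg_Iic (-x) stdPhi
  simp only [neg_neg, stdPhi_neg] at h
  rw [stdCdf, stdTail, h]

lemma stdCdf_nonneg (x : ℝ) : 0 ≤ stdCdf x :=
  setIntegral_nonneg measurableSet_Iic fun t _ => (stdPhi_pos t).le

lemma stdCdf_le_one (x : ℝ) : stdCdf x ≤ 1 := by
  linarith [stdCdf_add_stdTail x, stdTail_nonneg x]

lemma stdCdf_mono : Monotone stdCdf := fun _ _ hab =>
  setIntegral_mono_set integrable_stdPhi.integrableOn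
    (Eventually.of_forall fun t => (stdPhi_pos t).le) (Iic_subset_Iic.2 hab).eventuallyLE

lemma integrableOn_stdPhi_div_pow {x : ℝ} (hx : 0 < x) (k : ℕ) :
    IntegrableOn (fun t => stdPhi t / t ^ k) (Ioi x) := by
  refine Integrable.mono' ((integrable_stdPhi.div_const (x ^ k)).integrableOn) ?_ ?_
  · exact (continuous_stdPhi.continuousOn.div (continuousOn_pow k) fun t ht =>
      pow_ne_zero k (hx.trans ht).ne').aestronglyMeasurable measurableSet_Ioi
  · filter_upwards [ae_restrict_mem measurableSet_Ioi] with t ht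
    have ht0 : 0 < t := hx.trans ht
    rw [Real.norm_of_nonneg (div_nonneg (stdPhi_pos t).le (by positivity))]
    gcongr
    exacts [(stdPhi_pos t).le, ht.le]

lemma setIntegral_stdPhi_div_pow_nonneg {x : ℝ} (hx : 0 < x) (k : ℕ) :
    0 ≤ ∫ t in Ioi x, stdPhi t / t ^ k :=
  setIntegral_nonneg measurableSet_Ioi fun t ht =>
    div_nonneg (stdPhi_pos t).le (pow_pos (hx.trans ht) k).le

/-- Integration by parts: `-stdPhi t / t ^ (n + 1)` is an antiderivative of the integrand. -/
lemma integral_stdPhi_div_pow_add {x : ℝ} (hx : 0 < x) (n : ℕ) :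
    (∫ t in Ioi x, stdPhi t / t ^ n) + (n + 1) * ∫ t in Ioi x, stdPhi t / t ^ (n + 2) =
      stdPhi x / x ^ (n + 1) := by
  have hderiv : ∀ t ∈ Ioi x, HasDerivAt (fun t => -stdPhi t / t ^ (n + 1))
      (stdPhi t / t ^ n + (n + 1) * (stdPhi t / t ^ (n + 2))) t := by
    intro t ht
    have ht0 : t ≠ 0 := (hx.trans ht).ne'
    have h := (hasDerivAt_stdPhi t).neg.div (hasDerivAt_pow (n + 1) t) (pow_ne_zero _ ht0)
    refine h.congr_deriv ?_
    simp only [Pi.neg_apply, Nat.add_sub_cancel]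
    push_cast
    field_simp
    ring
  have hcont : ContinuousWithinAt (fun t => -stdPhi t / t ^ (n + 1)) (Ici x) x :=
    (continuous_stdPhi.neg.continuousAt.div (continuousAt_pow _ _)
      (pow_ne_zero _ hx.ne')).continuousWithinAt
  have hint := (integrableOn_stdPhi_div_pow hx n).add
    ((integrableOn_stdPhi_div_pow hx (n + 2)).const_mul ((n : ℝ) + 1))
  have hlim : Tendsto (fun t => -stdPhi t / t ^ (n + 1)) atTop (𝓝 0) := by
    have h := ((tendsto_pow_mul_stdPhi_atTop 0).mul
      (tendsto_inv_atTop_zero.comp (tendsto_pow_atTop n.succ_ne_zero))).neg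
    simpa [div_eq_mul_inv, neg_mul] using h
  rw [← integral_const_mul, ← integral_add (integrableOn_stdPhi_div_pow hx n)
    ((integrableOn_stdPhi_div_pow hx (n + 2)).const_mul _),
    integral_Ioi_of_hasDerivAt_of_tendsto hcont hderiv hint hlim]
  ring

lemma integral_stdPhi_div_pow_le {x : ℝ} (hx : 0 < x) (n : ℕ) :
    ∫ t in Ioi x, stdPhi t / t ^ n ≤ stdPhi x / x ^ (n + 1) := by
  have h := integral_stdPhi_div_pow_add hx n
  have h' := setIntegral_stdPhi_div_pow_nonneg hx (n + 2)
  nlinarith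

lemma stdTail_le {x : ℝ} (hx : 0 < x) : stdTail x ≤ stdPhi x / x := by
  simpa [stdTail] using integral_stdPhi_div_pow_le hx 0

/-- After three integrations by parts the remainder is `-15 x ∫ₓ^∞ φ(t) / t⁶ dt / φ(x)`. -/
lemma abs_mul_stdTail_div_stdPhi_sub_le {x : ℝ} (hx : 0 < x) :
    |x * stdTail x / stdPhi x - (1 - (x ^ 2)⁻¹ + 3 * (x ^ 4)⁻¹)| ≤ 15 * (x ^ 6)⁻¹ := by
  have h0 := integral_stdPhi_div_pow_add hx 0
  have h2 := integral_stdPhi_div_pow_add hx 2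
  have h4 := integral_stdPhi_div_pow_add hx 4
  have hI6 := integral_stdPhi_div_pow_le hx 6
  have hI6' := setIntegral_stdPhi_div_pow_nonneg hx 6
  have hφ := stdPhi_pos x
  norm_num at h0 h2 h4 hI6
  set I := ∫ t in Ioi x, stdPhi t / t ^ 6
  have hexp : x * stdTail x / stdPhi x - (1 - (x ^ 2)⁻¹ + 3 * (x ^ 4)⁻¹) =
      -(15 * x * I / stdPhi x) := by
    have : stdTail x = stdPhi x / x - stdPhi x / x ^ 3 + 3 * (stdPhi x / x ^ 5) - 15 * I := by
      rw [stdTail]; linarith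
    rw [this]
    field_simp
    ring
  rw [hexp, abs_neg, abs_of_nonneg (by positivity)]
  calc 15 * x * I / stdPhi x ≤ 15 * x * (stdPhi x / x ^ 7) / stdPhi x := by gcongr
    _ = 15 * (x ^ 6)⁻¹ := by field_simp

lemma tendsto_pow_mul_stdTail_atTop (k : ℕ) :
    Tendsto (fun y => y ^ k * stdTail y) atTop (𝓝 0) := by
  refine tendsto_of_tendsto_of_tendsto_of_le_of_le' tendsto_const_nhds
    (tendsto_pow_mul_stdPhi_atTop k) ?_ ?_
  · filter_upwards [eventually_ge_atTop 0] with y hy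
    exact mul_nonneg (pow_nonneg hy k) (stdTail_nonneg y)
  · filter_upwards [eventually_ge_atTop 1] with y hy
    have hy0 : 0 < y := one_pos.trans_le hy
    gcongr
    calc stdTail y ≤ stdPhi y / y := stdTail_le hy0
      _ ≤ stdPhi y := div_le_self (stdPhi_pos y).le hy

lemma tendsto_stdCdf_atTop : Tendsto stdCdf atTop (𝓝 1) := by
  have h := (tendsto_pow_mul_stdTail_atTop 0).const_sub 1
  simp only [pow_zero, one_mul, sub_zero] at h
  refine h.congr fun y => ?_
  linarith [stdCdf_add_stdTail y]

lemma tendsto_pow_mul_stdTail_div_stdCdf_mul_atTop {l : ℝ} (hl : 0 < l) (k : ℕ) :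
    Tendsto (fun x => x ^ k * (stdTail (l * x) / stdCdf (l * x))) atTop (𝓝 0) := by
  have h := (((tendsto_pow_mul_stdTail_atTop k).div tendsto_stdCdf_atTop one_ne_zero).comp
    (tendsto_id.const_mul_atTop hl)).const_mul (l ^ k)⁻¹
  rw [zero_div, mul_zero] at h
  refine h.congr fun x => ?_
  simp only [Function.comp_apply, Pi.div_apply, id]
  field_simp
  ring

lemma stdCdf_pos (x : ℝ) : 0 < stdCdf x := by
  rw [stdCdf, setIntegral_pos_iff_support_of_nonneg_ae
    (Eventually.of_forall fun t => (stdPhi_pos t).le) integrable_stdPhi.integrableOn]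
  simp [Function.support_eq_univ fun t => (stdPhi_pos t).ne']

lemma snPdf_nonneg (l t : ℝ) : 0 ≤ snPdf l t :=
  mul_nonneg (mul_nonneg zero_le_two (stdPhi_pos t).le) (stdCdf_nonneg _)

lemma snPdf_le (l t : ℝ) : snPdf l t ≤ 2 * stdPhi t :=
  mul_le_of_le_one_right (mul_nonneg zero_le_two (stdPhi_pos t).le) (stdCdf_le_one _)

lemma snPdf_add_snPdf_neg (l t : ℝ) : snPdf l t + snPdf l (-t) = 2 * stdPhi t := by
  rw [snPdf, snPdf, stdPhi_neg, mul_neg, stdCdf_neg, ← mul_add, stdCdf_add_stdTail, mul_one]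

lemma integrable_snPdf (l : ℝ) : Integrable (snPdf l) := by
  refine (integrable_stdPhi.const_mul 2).mono' ?_ (Eventually.of_forall fun t => ?_)
  · exact ((continuous_const.mul continuous_stdPhi).measurable.mul
      (stdCdf_mono.measurable.comp (measurable_const.mul measurable_id))).aestronglyMeasurable
  · rw [Real.norm_of_nonneg (snPdf_nonneg l t)]
    exact snPdf_le l t

lemma integral_snPdf (l : ℝ) : ∫ t, snPdf l t = 1 := by
  have h : (∫ t, snPdf l t) + ∫ t, snPdf l (-t) = 2 := by
    rw [← integral_add (integrable_snPdf l) (integrable_snPdf l).comp_neg]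
    simp only [snPdf_add_snPdf_neg, integral_const_mul, integral_stdPhi, mul_one]
  rw [integral_neg_eq_self] at h
  linarith

lemma one_sub_snCdf (l x : ℝ) : 1 - snCdf l x = ∫ t in Ioi x, snPdf l t := by
  rw [← integral_snPdf l, ← intervalIntegral.integral_Iic_add_Ioi
    (integrable_snPdf l).integrableOn (integrable_snPdf l).integrableOn, snCdf, add_sub_cancel_left]

lemma one_sub_snCdf_le (l x : ℝ) : 1 - snCdf l x ≤ 2 * stdTail x := by
  rw [one_sub_snCdf, stdTail, ← integral_const_mul]
  exact setIntegral_mono (integrable_snPdf l).integrableOn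
    (integrable_stdPhi.const_mul 2).integrableOn (snPdf_le l)

lemma two_mul_stdCdf_mul_stdTail_le_one_sub_snCdf {l : ℝ} (hl : 0 ≤ l) (x : ℝ) :
    2 * stdCdf (l * x) * stdTail x ≤ 1 - snCdf l x := by
  rw [one_sub_snCdf, stdTail, ← integral_const_mul]
  refine setIntegral_mono_on (integrable_stdPhi.const_mul _).integrableOn
    (integrable_snPdf l).integrableOn measurableSet_Ioi fun t ht => ?_
  rw [snPdf, mul_right_comm]
  gcongr
  · exact mul_nonneg zero_le_two (stdPhi_pos t).le
  · exact stdCdf_mono (mul_le_mul_of_nonneg_left (le_of_lt ht) hl)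

/-- The Mills ratio `x stdTail x / stdPhi x` is at most `1`, so dividing it by `stdCdf (l * x)`
moves it by at most `1 / stdCdf (l * x) - 1`. -/
lemma abs_skew_ratio_sub_mills_ratio_le {l x : ℝ} (hl : 0 ≤ l) (hx : 0 < x) :
    |x * (1 - snCdf l x) / (2 * stdPhi x * stdCdf (l * x)) - x * stdTail x / stdPhi x| ≤
      stdTail (l * x) / stdCdf (l * x) := by
  have hφ := stdPhi_pos x
  have hΦ := stdCdf_pos (l * x)
  have hU : stdTail (l * x) = 1 - stdCdf (l * x) := by linarith [stdCdf_add_stdTail (l * x)]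
  set Φ := stdCdf (l * x)
  have hM : x * stdTail x / stdPhi x ≤ 1 := by
    rw [div_le_one hφ, ← le_div_iff₀' hx]
    exact stdTail_le hx
  have hlow : x * stdTail x / stdPhi x ≤ x * (1 - snCdf l x) / (2 * stdPhi x * Φ) := by
    calc x * stdTail x / stdPhi x
        = x * (2 * Φ * stdTail x) / (2 * stdPhi x * Φ) := by field_simp
      _ ≤ _ := by gcongr; exact two_mul_stdCdf_mul_stdTail_le_one_sub_snCdf hl x
  have hup : x * (1 - snCdf l x) / (2 * stdPhi x * Φ) ≤
      x * stdTail x / stdPhi x + stdTail (l * x) / Φ := by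
    calc x * (1 - snCdf l x) / (2 * stdPhi x * Φ)
        ≤ x * (2 * stdTail x) / (2 * stdPhi x * Φ) := by
          gcongr; exact one_sub_snCdf_le l x
      _ = x * stdTail x / stdPhi x + x * stdTail x / stdPhi x * (stdTail (l * x) / Φ) := by
          rw [hU]
          field_simp
          ring
      _ ≤ _ :=
          add_le_add_right (mul_le_of_le_one_left (div_nonneg (stdTail_nonneg _) hΦ.le) hM) _
  rw [abs_le]
  constructor <;> linarith

theorem skew_normal_tail_expansion_pos (l : ℝ) (hl : 0 < l) :
    ∃ C > (0 : ℝ), ∃ x₀ > (0 : ℝ), ∀ x ≥ x₀,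
      |x * (1 - snCdf l x) / (2 * stdPhi x * stdCdf (l * x)) -
        (1 - (x ^ 2)⁻¹ + 3 * (x ^ 4)⁻¹)| ≤ C * (x ^ 6)⁻¹ := by
  obtain ⟨a, ha⟩ := eventually_atTop.1
    ((tendsto_pow_mul_stdTail_div_stdCdf_mul_atTop hl 6).eventually (eventually_le_nhds one_pos))
  refine ⟨16, by norm_num, max a 1, by positivity, fun x hx => ?_⟩
  have hx0 : 0 < x := by linarith [le_max_right a 1]
  have hskew : stdTail (l * x) / stdCdf (l * x) ≤ (x ^ 6)⁻¹ := by
    rw [← one_div, le_div_iff₀' (by positivity)]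
    exact ha x (le_of_max_le_left hx)
  calc _ ≤ |x * (1 - snCdf l x) / (2 * stdPhi x * stdCdf (l * x)) - x * stdTail x / stdPhi x| +
        |x * stdTail x / stdPhi x - (1 - (x ^ 2)⁻¹ + 3 * (x ^ 4)⁻¹)| := abs_sub_le _ _ _
    _ ≤ (x ^ 6)⁻¹ + 15 * (x ^ 6)⁻¹ :=
        add_le_add ((abs_skew_ratio_sub_mills_ratio_le hl.le hx0).trans hskew)
          (abs_mul_stdTail_div_stdPhi_sub_le hx0)
    _ = 16 * (x ^ 6)⁻¹ := by ring
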